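/- arXiv:1207.2982 — 3 statements merged into one kernel-verified Lean document; each statement's English description precedes it below -/
import Mathlib

section
/- Let g(x,q) = H(x) + G(q₁⁻, q₂⁺, q₃⁻, q₄⁺) with G(p) = |p|^β, β > 1. For all q, q̃ ∈ ℝ⁴, with p = (q₁⁻, q₂⁺, q₃⁻, q₄⁺) and p̃ = (q̃₁⁻, q̃₂⁺, q̃₃⁻, q̃₄⁺), one has g(x,q̃) − g(x,q) − g_q(x,q)·(q̃ − q) ≥ G(p̃) − G(p) − G_p(p)·(p̃ − p). -/
/-!
Both sides contain the same term `G(p̃) − G(p)` and `H(x)` cancels, so the claim reduces to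
`g_q(x,q)·(q̃ − q) ≤ G_p(p)·(p̃ − p)`. Both sides carry the factor `β |p|^(β-2) ≥ 0`, and
coordinatewise `a⁺ (b − a) ≤ a⁺ (b⁺ − a⁺)`: for `a ≤ 0` both sides vanish, and for `a > 0` this
is `b ≤ b⁺`. The negative parts `q⁻ = (−q)⁺` are handled by the same inequality applied to `−q`.
-/

open Real Finset

/-- Euclidean norm on `ℝ⁴`. -/
noncomputable def nrm (p : Fin 4 → ℝ) : ℝ := (∑ i, p i ^ 2) ^ ((1 : ℝ) / 2)

/-- Dot product on `ℝ⁴`. -/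
def dot (p r : Fin 4 → ℝ) : ℝ := ∑ i, p i * r i

/-- `p = (q₁⁻, q₂⁺, q₃⁻, q₄⁺)`. -/
noncomputable def pvec (q : Fin 4 → ℝ) : Fin 4 → ℝ :=
  ![max (-(q 0)) 0, max (q 1) 0, max (-(q 2)) 0, max (q 3) 0]

/-- `G(p) = |p|^β`. -/
noncomputable def Gfun (β : ℝ) (p : Fin 4 → ℝ) : ℝ := nrm p ^ β

/-- `G_p(p) · v = β |p|^(β-2) p · v`. -/
noncomputable def Gp (β : ℝ) (p v : Fin 4 → ℝ) : ℝ := β * nrm p ^ (β - 2) * dot p v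

/-- The numerical Hamiltonian `g(x,q) = H(x) + G(q₁⁻, q₂⁺, q₃⁻, q₄⁺)`. -/
noncomputable def gfun (β : ℝ) (H : ℝ × ℝ → ℝ) (x : ℝ × ℝ) (q : Fin 4 → ℝ) : ℝ :=
  H x + Gfun β (pvec q)

/-- The gradient of `g` w.r.t. `q`, applied to `r`:
`g_q(x,q) · r = β |p|^(β-2) (−p₁ r₁ + p₂ r₂ − p₃ r₃ + p₄ r₄)` where `p = pvec q`. -/
noncomputable def gq (β : ℝ) (q r : Fin 4 → ℝ) : ℝ :=
  β * nrm (pvec q) ^ (β - 2) *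
    (-(pvec q 0) * r 0 + pvec q 1 * r 1 - pvec q 2 * r 2 + pvec q 3 * r 3)

lemma max_zero_mul_sub_le {α : Type*} [Ring α] [LinearOrder α] [IsStrictOrderedRing α]
    (a b : α) : max a 0 * (b - a) ≤ max a 0 * (max b 0 - max a 0) := by
  rcases le_or_gt a 0 with ha | ha
  · simp [max_eq_right ha]
  · rw [max_eq_left ha.le]
    exact mul_le_mul_of_nonneg_left (sub_le_sub_right (le_max_left b 0) a) ha.le

lemma signed_dot_pvec_le (q qt : Fin 4 → ℝ) :
    -(pvec q 0) * (qt - q) 0 + pvec q 1 * (qt - q) 1 - pvec q 2 * (qt - q) 2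
      + pvec q 3 * (qt - q) 3 ≤ dot (pvec q) (pvec qt - pvec q) := by
  have h0 := max_zero_mul_sub_le (-(q 0)) (-(qt 0))
  have h1 := max_zero_mul_sub_le (q 1) (qt 1)
  have h2 := max_zero_mul_sub_le (-(q 2)) (-(qt 2))
  have h3 := max_zero_mul_sub_le (q 3) (qt 3)
  simp only [dot, Fin.sum_univ_four, pvec, Pi.sub_apply, Matrix.cons_val_zero,
    Matrix.cons_val_one, Matrix.head_cons, Matrix.cons_val_two, Matrix.tail_cons,
    Matrix.cons_val_three]
  linarith

lemma gq_le_Gp {β : ℝ} (hβ : 0 ≤ β) (q qt : Fin 4 → ℝ) :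
    gq β q (qt - q) ≤ Gp β (pvec q) (pvec qt - pvec q) := by
  have hcoef : 0 ≤ β * nrm (pvec q) ^ (β - 2) :=
    mul_nonneg hβ (rpow_nonneg (rpow_nonneg (by positivity) _) _)
  exact mul_le_mul_of_nonneg_left (signed_dot_pvec_le q qt) hcoef

/-- Lemma 3.2: `g(x,qt) − g(x,q) − g_q(x,q)·(qt−q) ≥ G(pt) − G(p) − G_p(p)·(pt−p)`,
where `p = pvec q` and `pt = pvec qt`. -/
theorem g_convexity_ge (β : ℝ) (hβ : 1 < β) (H : ℝ × ℝ → ℝ) (x : ℝ × ℝ)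
    (q qt : Fin 4 → ℝ) :
    gfun β H x qt - gfun β H x q - gq β q (qt - q)
      ≥ Gfun β (pvec qt) - Gfun β (pvec q) - Gp β (pvec q) (pvec qt - pvec q) := by
  have hlin := gq_le_Gp (zero_le_one.trans hβ.le) q qt
  simp only [gfun]
  linarith
end

section
/- For β ≥ 2 and G(p) = |p|^β on ℝ⁴, for all p, p̃ ∈ (ℝ₊)⁴: G(p̃) − G(p) − G_p(p)·(p̃ − p) ≥ (1/(β−1)) · max(|p|^{β−2}, |p̃|^{β−2}) · |p − p̃|². -/
open Real Finset

/-!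
The Bregman divergence of `‖·‖^β` between `x` and `y` and the distance `‖x - y‖²` depend only on
`a = ‖x‖`, `b = ‖y‖` and `t = ⟪x, y⟫`, affinely in `t`, and `0 ≤ t ≤ a b` for vectors with
nonnegative entries. The tangent-line inequality for the convex function `r ↦ r^(β-1)` gives the
bound with the weight `a^(β-2)` for every `t ≤ a b`. The weight `b^(β-2)` only matters when
`a ≤ b`; there it suffices to check the endpoints: `t = 0` is Young's inequality and `t = a b` is
the tangent-line inequality again.
-/

namespace Real
variable {a b : ℝ}

theorem rpow_add_mul_rpow_sub_one_mul_sub_le {r : ℝ} (hr : 1 ≤ r) (ha : 0 ≤ a) (hb : 0 ≤ b) :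
    a ^ r + r * a ^ (r - 1) * (b - a) ≤ b ^ r := by
  rcases ha.eq_or_lt with rfl | ha
  · rcases hr.eq_or_lt with rfl | hr
    · simp
    · simp [zero_rpow (by linarith : r ≠ 0), zero_rpow (by linarith : r - 1 ≠ 0), rpow_nonneg hb]
  have bernoulli := one_add_mul_self_le_rpow_one_add (s := b / a - 1)
    (by linarith [div_nonneg hb ha.le]) hr
  rw [add_sub_cancel, div_rpow hb ha.le, le_div_iff₀ (by positivity)] at bernoulli
  calc a ^ r + r * a ^ (r - 1) * (b - a) = (1 + r * (b / a - 1)) * a ^ r := by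
        rw [rpow_sub_one ha.ne']; field_simp
    _ ≤ b ^ r := bernoulli

theorem rpow_sub_two_mul_sq (ha : 0 ≤ a) {β : ℝ} (hβ : β ≠ 0) : a ^ (β - 2) * a ^ 2 = a ^ β := by
  rw [← rpow_two, ← rpow_add' ha (by simpa using hβ), sub_add_cancel]

theorem rpow_sub_two_mul_self (ha : 0 ≤ a) {β : ℝ} (hβ : β ≠ 1) :
    a ^ (β - 2) * a = a ^ (β - 1) := by
  conv_lhs => enter [2]; rw [← rpow_one a]
  rw [← rpow_add' ha (by contrapose! hβ; linarith)]
  ring_nf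

theorem rpow_sub_two_tangent_le {β : ℝ} (hβ : 2 ≤ β) (ha : 0 ≤ a) (hb : 0 ≤ b) :
    a ^ (β - 2) * a + (β - 1) * a ^ (β - 2) * (b - a) ≤ b ^ (β - 2) * b := by
  have h := rpow_add_mul_rpow_sub_one_mul_sub_le (by linarith : 1 ≤ β - 1) ha hb
  rwa [sub_sub, show (1 : ℝ) + 1 = 2 by norm_num, ← rpow_sub_two_mul_self ha (by linarith),
    ← rpow_sub_two_mul_self hb (by linarith)] at h

theorem sq_mul_rpow_sub_two_le {β : ℝ} (hβ : 2 ≤ β) (ha : 0 ≤ a) (hb : 0 ≤ b) :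
    a ^ 2 * b ^ (β - 2) ≤ a ^ β + (β - 2) * b ^ β := by
  have hβ0 : 0 < β := by linarith
  have young := geom_mean_le_arith_mean2_weighted (w₁ := 2 / β) (w₂ := (β - 2) / β)
    (p₁ := a ^ β) (p₂ := b ^ β) (by positivity) (div_nonneg (by linarith) hβ0.le)
    (rpow_nonneg ha β) (rpow_nonneg hb β) (by field_simp; ring)
  rw [← rpow_mul ha, ← rpow_mul hb, mul_div_cancel₀ _ hβ0.ne', mul_div_cancel₀ _ hβ0.ne',
    rpow_two] at young
  refine young.trans (add_le_add ?_ ?_)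
  · exact mul_le_of_le_one_left (rpow_nonneg ha β) ((div_le_one hβ0).2 hβ)
  · exact mul_le_mul_of_nonneg_right (div_le_self (by linarith) (by linarith)) (rpow_nonneg hb β)

end Real

/-- The Bregman divergence of `‖·‖^β` between `x` and `y`, in terms of `a = ‖x‖`, `b = ‖y‖` and
`t = ⟪x, y⟫`. -/
noncomputable def polarBregman (β a b t : ℝ) : ℝ := b ^ β - a ^ β - β * a ^ (β - 2) * (t - a ^ 2)

section polarBregman
variable {β a b t : ℝ}

theorem polarBregman_eq (hβ : 2 ≤ β) (ha : 0 ≤ a) (hb : 0 ≤ b) :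
    polarBregman β a b t
      = b ^ (β - 2) * b ^ 2 - a ^ (β - 2) * a ^ 2 - β * a ^ (β - 2) * (t - a ^ 2) := by
  rw [polarBregman, rpow_sub_two_mul_sq ha (by linarith), rpow_sub_two_mul_sq hb (by linarith)]

theorem rpow_sub_two_mul_le_polarBregman (hβ : 2 ≤ β) (ha : 0 ≤ a) (hb : 0 ≤ b)
    (htab : t ≤ a * b) :
    a ^ (β - 2) * (a ^ 2 + b ^ 2 - 2 * t) ≤ (β - 1) * polarBregman β a b t := by
  have tangent := mul_le_mul_of_nonneg_left
    (mul_le_mul_of_nonneg_left (rpow_sub_two_tangent_le hβ ha hb) hb)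
    (by linarith : (0 : ℝ) ≤ β - 1)
  have hA : 0 ≤ a ^ (β - 2) := rpow_nonneg ha _
  rw [polarBregman_eq hβ ha hb]
  nlinarith [mul_nonneg (mul_nonneg hA (sq_nonneg (a - b))) (by nlinarith : 0 ≤ (β - 1) ^ 2 - 1),
    mul_nonneg (mul_nonneg hA (sub_nonneg.2 htab)) (by nlinarith : 0 ≤ β * (β - 1) - 2)]

theorem rpow_sub_two_mul_le_polarBregman_of_le (hβ : 2 ≤ β) (ha : 0 ≤ a) (hab : a ≤ b)
    (ht : 0 ≤ t) (htab : t ≤ a * b) :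
    b ^ (β - 2) * (a ^ 2 + b ^ 2 - 2 * t) ≤ (β - 1) * polarBregman β a b t := by
  have hb := ha.trans hab
  have hA : 0 ≤ a ^ (β - 2) := rpow_nonneg ha _
  have hAB : a ^ (β - 2) ≤ b ^ (β - 2) := rpow_le_rpow ha hab (by linarith)
  have young := sq_mul_rpow_sub_two_le hβ ha hb
  rw [← rpow_sub_two_mul_sq ha (β := β) (by linarith),
    ← rpow_sub_two_mul_sq hb (β := β) (by linarith)] at young
  have h_orth : b ^ (β - 2) * (a ^ 2 + b ^ 2) ≤ (β - 1) * polarBregman β a b 0 := by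
    rw [polarBregman_eq hβ ha hb]
    nlinarith [mul_nonneg (mul_nonneg hA (sq_nonneg a)) (by nlinarith : 0 ≤ (β - 1) ^ 2 - 1)]
  have h_par : b ^ (β - 2) * (b - a) ^ 2 ≤ polarBregman β a b (a * b) := by
    rw [polarBregman_eq hβ ha hb]
    nlinarith [mul_le_mul_of_nonneg_left (rpow_sub_two_tangent_le hβ ha hb) ha,
      mul_nonneg (mul_nonneg ha (sub_nonneg.2 hAB)) (sub_nonneg.2 hab)]
  replace h_par : b ^ (β - 2) * (a ^ 2 + b ^ 2 - 2 * (a * b))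
      ≤ (β - 1) * polarBregman β a b (a * b) := by
    have hB : 0 ≤ b ^ (β - 2) * (b - a) ^ 2 := mul_nonneg (hA.trans hAB) (sq_nonneg _)
    nlinarith [mul_nonneg (by linarith : (0 : ℝ) ≤ β - 2) (hB.trans h_par)]
  -- both sides are affine in `t`
  rw [polarBregman] at *
  rcases le_total 0 (2 * b ^ (β - 2) - (β - 1) * β * a ^ (β - 2)) with hs | hs
  · nlinarith [mul_nonneg ht hs]
  · nlinarith [mul_nonneg_of_nonpos_of_nonpos (sub_nonpos.2 htab) hs]

theorem max_rpow_sub_two_mul_le_polarBregman (hβ : 2 ≤ β) (ha : 0 ≤ a) (hb : 0 ≤ b)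
    (ht : 0 ≤ t) (htab : t ≤ a * b) :
    max (a ^ (β - 2)) (b ^ (β - 2)) * (a ^ 2 + b ^ 2 - 2 * t)
      ≤ (β - 1) * polarBregman β a b t := by
  rcases le_total a b with hab | hba
  · rw [max_eq_right (rpow_le_rpow ha hab (by linarith))]
    exact rpow_sub_two_mul_le_polarBregman_of_le hβ ha hab ht htab
  · rw [max_eq_left (rpow_le_rpow hb hba (by linarith))]
    exact rpow_sub_two_mul_le_polarBregman hβ ha hb htab

end polarBregman

open scoped InnerProductSpace in
theorem norm_rpow_bregman_ge_of_inner_nonneg {E : Type*} [NormedAddCommGroup E]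
    [InnerProductSpace ℝ E] {β : ℝ} (hβ : 2 ≤ β) {x y : E} (hxy : 0 ≤ ⟪x, y⟫_ℝ) :
    1 / (β - 1) * max (‖x‖ ^ (β - 2)) (‖y‖ ^ (β - 2)) * ‖x - y‖ ^ 2
      ≤ ‖y‖ ^ β - ‖x‖ ^ β - β * ‖x‖ ^ (β - 2) * ⟪x, y - x⟫_ℝ := by
  have h := max_rpow_sub_two_mul_le_polarBregman hβ (norm_nonneg x) (norm_nonneg y) hxy
    (real_inner_le_norm x y)
  rw [polarBregman] at h
  rw [norm_sub_sq_real, inner_sub_right, real_inner_self_eq_norm_sq, mul_assoc,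
    one_div_mul_eq_div, div_le_iff₀ (by linarith)]
  linarith

theorem nrm_eq_norm (v : Fin 4 → ℝ) : nrm v = ‖WithLp.toLp 2 v‖ := by
  simp [nrm, EuclideanSpace.norm_eq, sqrt_eq_rpow]

theorem dot_eq_inner (v w : Fin 4 → ℝ) :
    dot v w = inner ℝ (WithLp.toLp 2 v) (WithLp.toLp 2 w) := by
  simp [dot, PiLp.inner_apply, mul_comm]

/-- For `β ≥ 2` and `p, pt ∈ (ℝ₊)⁴`:
`G(pt) − G(p) − G_p(p)·(pt − p) ≥ (1/(β−1)) max(|p|^(β−2), |pt|^(β−2)) |p − pt|²`. -/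
theorem G_strong_convexity (β : ℝ) (hβ : 2 ≤ β) (p pt : Fin 4 → ℝ)
    (hp : ∀ i, 0 ≤ p i) (hpt : ∀ i, 0 ≤ pt i) :
    Gfun β pt - Gfun β p - Gp β p (pt - p)
      ≥ 1 / (β - 1) * max (nrm p ^ (β - 2)) (nrm pt ^ (β - 2)) * nrm (p - pt) ^ 2 := by
  have hinner : 0 ≤ dot p pt := sum_nonneg fun i _ => mul_nonneg (hp i) (hpt i)
  rw [dot_eq_inner] at hinner
  simpa [Gfun, Gp, nrm_eq_norm, dot_eq_inner] using norm_rpow_bregman_ge_of_inner_nonneg hβ hinner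
end

section
/- For 1 < β < 2 and m bounded below by m̲ > 0, the functional 𝒢(m, 0, u) ≥ 2^{2β−6} β(β−1) m̲ ∑_{n=1}^{N_T} ∑_{i,j} |[D_h uⁿ]_{i,j}|^β. -/
open Real Finset

variable {Nh : ℕ}

/-- `[D_h u]_{i,j}`: the four one-sided finite differences at `(i,j)` on the periodic grid. -/
noncomputable def Dh (h : ℝ) (u : ZMod Nh → ZMod Nh → ℝ) (i j : ZMod Nh) : Fin 4 → ℝ :=
  ![(u (i + 1) j - u i j) / h, (u i j - u (i - 1) j) / h,
    (u i (j + 1) - u i j) / h, (u i j - u i (j - 1)) / h]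

/-- The discrete functional
`𝒢(m,u,ũ) = ∑_{n=1}^{N_T} ∑_{i,j} m^{n−1}_{i,j} (g(x_{ij},[Dũⁿ]) − g(x_{ij},[Duⁿ])
 − g_q(x_{ij},[Duⁿ])·([Dũⁿ]−[Duⁿ]))`, where `g(x_{ij},q) = H_{ij} + G(pvec q)`. -/
noncomputable def Gcal [NeZero Nh] (β : ℝ) (NT : ℕ) (h : ℝ) (Hgrid : ZMod Nh → ZMod Nh → ℝ)
    (m u ut : ℕ → ZMod Nh → ZMod Nh → ℝ) : ℝ :=
  ∑ n ∈ Finset.Icc 1 NT, ∑ i : ZMod Nh, ∑ j : ZMod Nh,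
    m (n - 1) i j *
      ((Hgrid i j + Gfun β (pvec (Dh h (ut n) i j)))
        - (Hgrid i j + Gfun β (pvec (Dh h (u n) i j)))
        - gq β (Dh h (u n) i j) (Dh h (ut n) i j - Dh h (u n) i j))


/-! At `ũ = 0` the summand of `𝒢` reduces to `m |p|^β` with `p = pvec [D_h uⁿ]`, the upwind
part of the discrete gradient. On the periodic grid each forward difference `(u_{i+1} - u_i)/h`
occurs twice in `[D_h u]` (forward at `i`, backward at `i + 1`), while `pvec` keeps its negative
part at `i` and its positive part at `i + 1`. Hence, with `|q|^β ≤ ∑ |q_k|^β` (subadditivity of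
`t ↦ t^(β/2)`) and `∑ p_k^β ≤ 4^(1 - β/2) |p|^β` (concavity), the grid sums satisfy
`∑ |D_h u|^β ≤ 2^(3-β) ∑ |p|^β`, and `2^(2β-6) β (β-1) 2^(3-β) ≤ 1` for `1 ≤ β ≤ 2`. -/

namespace Real

theorem sq_rpow_div_two {x : ℝ} (hx : 0 ≤ x) (β : ℝ) : (x ^ 2) ^ (β / 2) = x ^ β := by
  rw [← rpow_natCast, ← rpow_mul hx]
  ring_nf

theorem rpow_sum_le_sum_rpow {ι : Type*} (s : Finset ι) {f : ι → ℝ} (hf : ∀ i ∈ s, 0 ≤ f i)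
    {p : ℝ} (hp₀ : 0 < p) (hp₁ : p ≤ 1) :
    (∑ i ∈ s, f i) ^ p ≤ ∑ i ∈ s, f i ^ p := by
  classical
  induction s using Finset.induction_on with
  | empty => simp [zero_rpow hp₀.ne']
  | insert a s ha ih =>
    have hs : ∀ i ∈ s, 0 ≤ f i := fun i hi => hf i (mem_insert_of_mem hi)
    rw [sum_insert ha, sum_insert ha]
    calc (f a + ∑ i ∈ s, f i) ^ p ≤ f a ^ p + (∑ i ∈ s, f i) ^ p :=
          rpow_add_le_add_rpow (hf a (mem_insert_self a s)) (sum_nonneg hs) hp₀.le hp₁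
      _ ≤ f a ^ p + ∑ i ∈ s, f i ^ p := by gcongr; exact ih hs

theorem sum_rpow_le_card_rpow_mul_rpow_sum {ι : Type*} (s : Finset ι) {f : ι → ℝ}
    (hf : ∀ i ∈ s, 0 ≤ f i) {p : ℝ} (hp₀ : 0 < p) (hp₁ : p ≤ 1) :
    ∑ i ∈ s, f i ^ p ≤ (#s : ℝ) ^ (1 - p) * (∑ i ∈ s, f i) ^ p := by
  have hfp : ∀ i ∈ s, 0 ≤ f i ^ p := fun i hi => rpow_nonneg (hf i hi) p
  have h := rpow_sum_le_const_mul_sum_rpow_of_nonneg s (one_le_inv₀ hp₀ |>.2 hp₁) hfp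
  rw [sum_congr rfl fun i hi => rpow_rpow_inv (hf i hi) hp₀.ne'] at h
  calc ∑ i ∈ s, f i ^ p = ((∑ i ∈ s, f i ^ p) ^ p⁻¹) ^ p :=
        (rpow_inv_rpow (sum_nonneg hfp) hp₀.ne').symm
    _ ≤ ((#s : ℝ) ^ (p⁻¹ - 1) * ∑ i ∈ s, f i) ^ p :=
        rpow_le_rpow (rpow_nonneg (sum_nonneg hfp) _) h hp₀.le
    _ = (#s : ℝ) ^ (1 - p) * (∑ i ∈ s, f i) ^ p := by
        rw [mul_rpow (by positivity) (sum_nonneg hf), ← rpow_mul (Nat.cast_nonneg _),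
          sub_mul, inv_mul_cancel₀ hp₀.ne', one_mul]

end Real

lemma nrm_nonneg (q : Fin 4 → ℝ) : 0 ≤ nrm q :=
  rpow_nonneg (sum_nonneg fun _ _ => sq_nonneg _) _

lemma nrm_rpow (q : Fin 4 → ℝ) (β : ℝ) : nrm q ^ β = (∑ k, q k ^ 2) ^ (β / 2) := by
  rw [nrm, ← rpow_mul (sum_nonneg fun _ _ => sq_nonneg _)]
  ring_nf

lemma nrm_rpow_le_sum_abs_rpow {β : ℝ} (hβ₀ : 0 < β) (hβ₂ : β ≤ 2) (q : Fin 4 → ℝ) :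
    nrm q ^ β ≤ ∑ k, |q k| ^ β := by
  rw [nrm_rpow]
  calc (∑ k, q k ^ 2) ^ (β / 2) ≤ ∑ k, (q k ^ 2) ^ (β / 2) :=
        rpow_sum_le_sum_rpow _ (fun _ _ => sq_nonneg _) (by positivity) (by linarith)
    _ = ∑ k, |q k| ^ β := sum_congr rfl fun k _ => by rw [← sq_abs, sq_rpow_div_two (abs_nonneg _)]

lemma sum_rpow_le_two_rpow_mul_nrm_rpow {β : ℝ} (hβ₀ : 0 < β) (hβ₂ : β ≤ 2) {q : Fin 4 → ℝ}
    (hq : ∀ k, 0 ≤ q k) : ∑ k, q k ^ β ≤ 2 ^ (2 - β) * nrm q ^ β := by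
  have h := sum_rpow_le_card_rpow_mul_rpow_sum univ (fun k _ => sq_nonneg (q k))
    (p := β / 2) (by positivity) (by linarith)
  have h4 : ((#(univ : Finset (Fin 4)) : ℕ) : ℝ) ^ (1 - β / 2) = 2 ^ (2 - β) := by
    rw [card_univ, Fintype.card_fin, show ((4 : ℕ) : ℝ) = 2 ^ (2 : ℝ) by norm_num,
      ← rpow_mul zero_le_two]
    ring_nf
  simpa only [sq_rpow_div_two (hq _), h4, ← nrm_rpow] using h

lemma pvec_nonneg (q : Fin 4 → ℝ) (k : Fin 4) : 0 ≤ pvec q k := by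
  fin_cases k <;> simp [pvec]

lemma abs_rpow_eq_max_rpow_add_max_neg_rpow {β : ℝ} (hβ : β ≠ 0) (x : ℝ) :
    |x| ^ β = max x 0 ^ β + max (-x) 0 ^ β := by
  rcases le_total 0 x with hx | hx
  · simp [abs_of_nonneg hx, hx, zero_rpow hβ]
  · simp [abs_of_nonpos hx, hx, zero_rpow hβ]

section Grid

variable [NeZero Nh] (h : ℝ) (v : ZMod Nh → ZMod Nh → ℝ)

lemma sum_sum_Dh_one (f : ℝ → ℝ) :
    ∑ i, ∑ j, f (Dh h v i j 1) = ∑ i, ∑ j, f (Dh h v i j 0) := by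
  rw [← Equiv.sum_comp (Equiv.addRight (1 : ZMod Nh)) (fun i => ∑ j, f (Dh h v i j 1))]
  simp [Dh]

lemma sum_sum_Dh_three (f : ℝ → ℝ) :
    ∑ i, ∑ j, f (Dh h v i j 3) = ∑ i, ∑ j, f (Dh h v i j 2) := by
  refine sum_congr rfl fun i _ => ?_
  rw [← Equiv.sum_comp (Equiv.addRight (1 : ZMod Nh)) (fun j => f (Dh h v i j 3))]
  simp [Dh]

lemma sum_sum_abs_rpow_Dh {β : ℝ} (hβ : β ≠ 0) :
    ∑ i, ∑ j, ∑ k, |Dh h v i j k| ^ β = 2 * ∑ i, ∑ j, ∑ k, pvec (Dh h v i j) k ^ β := by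
  simp only [pvec, Fin.sum_univ_four, Matrix.cons_val, sum_add_distrib]
  rw [sum_sum_Dh_one h v (|·| ^ β), sum_sum_Dh_three h v (|·| ^ β),
    sum_sum_Dh_one h v (max · 0 ^ β), sum_sum_Dh_three h v (max · 0 ^ β)]
  simp only [abs_rpow_eq_max_rpow_add_max_neg_rpow hβ, sum_add_distrib]
  ring

lemma sum_sum_nrm_rpow_Dh_le {β : ℝ} (hβ₀ : 0 < β) (hβ₂ : β ≤ 2) :
    ∑ i, ∑ j, nrm (Dh h v i j) ^ β ≤ 2 ^ (3 - β) * ∑ i, ∑ j, nrm (pvec (Dh h v i j)) ^ β :=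
  calc ∑ i, ∑ j, nrm (Dh h v i j) ^ β ≤ ∑ i, ∑ j, ∑ k, |Dh h v i j k| ^ β := by
        gcongr with i _ j _
        exact nrm_rpow_le_sum_abs_rpow hβ₀ hβ₂ _
    _ = 2 * ∑ i, ∑ j, ∑ k, pvec (Dh h v i j) k ^ β := sum_sum_abs_rpow_Dh h v hβ₀.ne'
    _ ≤ 2 * ∑ i, ∑ j, 2 ^ (2 - β) * nrm (pvec (Dh h v i j)) ^ β := by
        gcongr with i _ j _
        exact sum_rpow_le_two_rpow_mul_nrm_rpow hβ₀ hβ₂ (pvec_nonneg _)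
    _ = 2 ^ (3 - β) * ∑ i, ∑ j, nrm (pvec (Dh h v i j)) ^ β := by
        simp only [← mul_sum, ← mul_assoc]
        rw [show (3 : ℝ) - β = 1 + (2 - β) by ring, rpow_add two_pos, rpow_one]

end Grid

lemma Gcal_zero_left [NeZero Nh] {β : ℝ} (hβ : β ≠ 0) (NT : ℕ) (h : ℝ)
    (Hgrid : ZMod Nh → ZMod Nh → ℝ) (m u : ℕ → ZMod Nh → ZMod Nh → ℝ) :
    Gcal β NT h Hgrid m (fun _ _ _ => 0) u =
      ∑ n ∈ Icc 1 NT, ∑ i, ∑ j, m (n - 1) i j * nrm (pvec (Dh h (u n) i j)) ^ β := by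
  have hD : ∀ i j : ZMod Nh, Dh h (fun _ _ => 0) i j = 0 := by
    intro i j; ext k; fin_cases k <;> simp [Dh]
  have hp : pvec 0 = 0 := by
    ext k; fin_cases k <;> simp [pvec]
  simp [Gcal, hD, hp, gq, Gfun, nrm, zero_rpow hβ]

lemma two_rpow_mul_le_one {β : ℝ} (hβ₁ : 1 ≤ β) (hβ₂ : β ≤ 2) :
    2 ^ (2 * β - 6) * β * (β - 1) * 2 ^ (3 - β) ≤ (1 : ℝ) := by
  have hpow : (2 : ℝ) ^ (2 * β - 6) * 2 ^ (3 - β) = 2 ^ (β - 3) := by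
    rw [← rpow_add two_pos]; ring_nf
  have hhalf : (2 : ℝ) ^ (β - 3) ≤ 2⁻¹ := by
    rw [← rpow_neg_one]; exact rpow_le_rpow_of_exponent_le one_le_two (by linarith)
  have hpos : (0 : ℝ) < 2 ^ (β - 3) := rpow_pos_of_pos two_pos _
  calc 2 ^ (2 * β - 6) * β * (β - 1) * 2 ^ (3 - β) = 2 ^ (β - 3) * (β * (β - 1)) := by
        rw [← hpow]; ring
    _ ≤ 2⁻¹ * 2 := by gcongr; nlinarith
    _ = 1 := by norm_num

theorem Gcal_zero_lower_bound_general [NeZero Nh] (β : ℝ) (hβ₁ : 1 < β) (hβ₂ : β < 2)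
    (NT : ℕ) (h : ℝ)
    (Hgrid : ZMod Nh → ZMod Nh → ℝ) (m u : ℕ → ZMod Nh → ZMod Nh → ℝ)
    (mlow : ℝ) (hmlow : 0 < mlow) (hm : ∀ n i j, mlow ≤ m n i j) :
    Gcal β NT h Hgrid m (fun _ _ _ => 0) u
      ≥ (2 : ℝ) ^ (2 * β - 6) * β * (β - 1) * mlow *
          ∑ n ∈ Finset.Icc 1 NT, ∑ i : ZMod Nh, ∑ j : ZMod Nh,
            nrm (Dh h (u n) i j) ^ β := by
  have hβ₀ : 0 < β := by linarith
  set C : ℝ := 2 ^ (2 * β - 6) * β * (β - 1)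
  have hC : 0 ≤ C := by have := sub_pos.2 hβ₁; positivity
  have hstep : ∀ n, C * ∑ i, ∑ j, nrm (Dh h (u n) i j) ^ β
      ≤ ∑ i, ∑ j, nrm (pvec (Dh h (u n) i j)) ^ β := fun n =>
    calc C * ∑ i, ∑ j, nrm (Dh h (u n) i j) ^ β
        ≤ C * (2 ^ (3 - β) * ∑ i, ∑ j, nrm (pvec (Dh h (u n) i j)) ^ β) := by
          gcongr; exact sum_sum_nrm_rpow_Dh_le h (u n) hβ₀ hβ₂.le
      _ ≤ ∑ i, ∑ j, nrm (pvec (Dh h (u n) i j)) ^ β := by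
          rw [← mul_assoc]
          exact mul_le_of_le_one_left
            (sum_nonneg fun _ _ => sum_nonneg fun _ _ => rpow_nonneg (nrm_nonneg _) _)
            (two_rpow_mul_le_one hβ₁.le hβ₂.le)
  rw [Gcal_zero_left hβ₀.ne', ge_iff_le, mul_comm C, mul_assoc, mul_sum]
  calc mlow * ∑ n ∈ Icc 1 NT, C * ∑ i, ∑ j, nrm (Dh h (u n) i j) ^ β
      ≤ mlow * ∑ n ∈ Icc 1 NT, ∑ i, ∑ j, nrm (pvec (Dh h (u n) i j)) ^ β := by
        gcongr with n _; exact hstep n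
    _ ≤ ∑ n ∈ Icc 1 NT, ∑ i, ∑ j, m (n - 1) i j * nrm (pvec (Dh h (u n) i j)) ^ β := by
        simp only [mul_sum]
        gcongr with n _ i _ j _
        · exact rpow_nonneg (nrm_nonneg _) _
        · exact hm _ _ _

/-- For `1 < β < 2` and `m` bounded below by `m̲ > 0`:
`𝒢(m,0,u) ≥ 2^(2β−6) β(β−1) m̲ ∑_{n=1}^{N_T} ∑_{i,j} |[D_h uⁿ]_{i,j}|^β`. -/
theorem Gcal_zero_lower_bound [NeZero Nh] (β : ℝ) (hβ₁ : 1 < β) (hβ₂ : β < 2)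
    (NT : ℕ) (h : ℝ) (hh : 0 < h)
    (Hgrid : ZMod Nh → ZMod Nh → ℝ) (m u : ℕ → ZMod Nh → ZMod Nh → ℝ)
    (mlow : ℝ) (hmlow : 0 < mlow) (hm : ∀ n i j, mlow ≤ m n i j) :
    Gcal β NT h Hgrid m (fun _ _ _ => 0) u
      ≥ (2 : ℝ) ^ (2 * β - 6) * β * (β - 1) * mlow *
          ∑ n ∈ Finset.Icc 1 NT, ∑ i : ZMod Nh, ∑ j : ZMod Nh,
            nrm (Dh h (u n) i j) ^ β :=
  Gcal_zero_lower_bound_general β hβ₁ hβ₂ NT h Hgrid m u mlow hmlow hm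
end
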